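/- arXiv:2409.02974 — 2 statements merged into one kernel-verified Lean document; each statement's English description precedes it below -/
import Mathlib

section
/- For every ε > 0 there exists N such that for all n ≥ N, the maximum number of inclusion-wise minimal vertex cuts in a graph on n vertices is at most 2^((1+ε)·H(1/3)·n), where H(x) = -x·log₂(x) - (1-x)·log₂(1-x) is the binary entropy function. In particular, for sufficiently large n this maximum is at most 1.8899^n. -/
/-- `Separates G u v T` means every walk from `u` to `v` in `G` meets `T`;
for `u, v ∉ T` this says `u` and `v` lie in different connected components of `G \ T`. -/
def Separates {V : Type*} (G : SimpleGraph V) (u v : V) (T : Set V) : Prop :=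
  ∀ p : G.Walk u v, ∃ x ∈ p.support, x ∈ T

/-- `T` is an inclusion-wise minimal `u`–`v` separator in `G`:
`T ⊆ V(G) \ {u, v}`, removing `T` puts `u` and `v` in different connected components,
and removing any proper subset `T' ⊊ T` leaves `u` and `v` in the same component. -/
def IsMinSeparator {V : Type*} (G : SimpleGraph V) (u v : V) (T : Set V) : Prop :=
  u ∉ T ∧ v ∉ T ∧ Separates G u v T ∧ ∀ T' ⊂ T, ¬ Separates G u v T'

/-- `mc G u v` is the number of inclusion-wise minimal `u`–`v` separators in `G`. -/
noncomputable def mc {V : Type*} (G : SimpleGraph V) (u v : V) : ℕ :=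
  {T : Set V | IsMinSeparator G u v T}.ncard

/-- `g n` is the maximum of `mc G u v` over graphs `G` on `n + 2` vertices and
pairs of distinct vertices `u ≠ v`. -/
noncomputable def g (n : ℕ) : ℕ :=
  sSup {k | ∃ (G : SimpleGraph (Fin (n + 2))) (u v : Fin (n + 2)), u ≠ v ∧ mc G u v = k}

/-- `T` is a vertex cut of `G`: removing `T` disconnects `G`, i.e. some two remaining
vertices lie in different connected components of `G \ T`. -/
def IsCutSet {V : Type*} (G : SimpleGraph V) (T : Set V) : Prop :=
  ∃ u v, u ∉ T ∧ v ∉ T ∧ Separates G u v T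

/-- `T` is an inclusion-wise minimal vertex cut of `G`. -/
def IsMinCutSet {V : Type*} (G : SimpleGraph V) (T : Set V) : Prop :=
  IsCutSet G T ∧ ∀ T' ⊂ T, ¬ IsCutSet G T'

/-- `c n` is the maximum number of inclusion-wise minimal vertex cuts of a graph
on `n` vertices. -/
noncomputable def c (n : ℕ) : ℕ :=
  sSup {k | ∃ G : SimpleGraph (Fin n), {T : Set (Fin n) | IsMinCutSet G T}.ncard = k}

/-- The binary entropy function `H(x) = -x log₂ x - (1 - x) log₂ (1 - x)`. -/
noncomputable def binH (x : ℝ) : ℝ :=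
  -x * Real.logb 2 x - (1 - x) * Real.logb 2 (1 - x)

/-- The outer neighbourhood of `X` in `G`: all vertices outside `X` having a
neighbour in `X`. -/
def outNbhd {V : Type*} (G : SimpleGraph V) (X : Set V) : Set V :=
  {y | y ∉ X ∧ ∃ x ∈ X, G.Adj x y}

/-- The vertex set of the connected component of `u` in `G \ T`: all vertices
reachable from `u` by a walk avoiding `T`. -/
def compOf {V : Type*} (G : SimpleGraph V) (T : Set V) (u : V) : Set V :=
  {x | ∃ p : G.Walk u x, ∀ y ∈ p.support, y ∉ T}

open Filter

section Aux

open SimpleGraph Finset Real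

variable {V : Type*} {G : SimpleGraph V} {T : Set V} {u v x y t : V}

lemma self_mem_compOf (hu : u ∉ T) : u ∈ compOf G T u :=
  ⟨Walk.nil, by simp [hu]⟩

lemma not_mem_T_of_mem_compOf (hx : x ∈ compOf G T u) : x ∉ T := by
  obtain ⟨p, hp⟩ := hx
  exact hp x p.end_mem_support

lemma adj_mem_compOf (hx : x ∈ compOf G T u) (hxy : G.Adj x y) (hy : y ∉ T) :
    y ∈ compOf G T u := by
  obtain ⟨p, hp⟩ := hx
  refine ⟨p.concat hxy, ?_⟩
  intro z hz
  rw [Walk.support_concat, List.mem_append, List.mem_singleton] at hz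
  rcases hz with hz | rfl
  · exact hp z hz
  · exact hy

lemma outNbhd_compOf_subset : outNbhd G (compOf G T u) ⊆ T := by
  rintro y ⟨hyC, x, hxC, hxy⟩
  by_contra hyT
  exact hyC (adj_mem_compOf hxC hxy hyT)

lemma sep_symm (h : Separates G u v T) : Separates G v u T := by
  intro p
  obtain ⟨x, hx, hxT⟩ := h p.reverse
  rw [Walk.support_reverse, List.mem_reverse] at hx
  exact ⟨x, hx, hxT⟩

/-- If removing `t` from `T` destroys separation, `t` has a neighbour in the component of `u`. -/
lemma exists_adj_compOf (hu : u ∉ T) (hsep : Separates G u v T) (ht : t ∈ T)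
    (hns : ¬ Separates G u v (T \ {t})) : ∃ x ∈ compOf G T u, G.Adj x t := by
  classical
  rw [Separates] at hns
  push_neg at hns
  obtain ⟨p, hp⟩ := hns
  obtain ⟨z, hzp, hzT⟩ := hsep p
  have hzt : z = t := by
    have := hp z hzp
    simp only [Set.mem_diff, Set.mem_singleton_iff, not_and, not_not] at this
    exact this hzT
  subst hzt
  set q := p.takeUntil z hzp with hq
  have hqsub : ∀ w ∈ q.support, w ∈ p.support := fun w hw =>
    (p.support_takeUntil_subset hzp) hw
  have hcount : q.support.count z = 1 := p.count_support_takeUntil_eq_one hzp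
  have huz : u ≠ z := fun h => hu (h ▸ ht)
  obtain ⟨x, hadj, q', hq'⟩ := (q.reverse).exists_eq_cons_of_ne (Ne.symm huz)
  have hsupp : q.reverse.support = z :: q'.support := by rw [hq', Walk.support_cons]
  have hznq' : z ∉ q'.support := by
    have : q.reverse.support.count z = 1 := by
      rw [Walk.support_reverse, List.count_reverse]; exact hcount
    rw [hsupp, List.count_cons_self] at this
    have h0 : q'.support.count z = 0 := by omega
    exact List.count_eq_zero.mp h0
  have hq'T : ∀ w ∈ q'.support, w ∉ T := by
    intro w hw
    have hwz : w ≠ z := fun h => hznq' (h ▸ hw)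
    have hwp : w ∈ p.support := by
      apply hqsub
      have : w ∈ q.reverse.support := by rw [hsupp]; exact List.mem_cons_of_mem _ hw
      rwa [Walk.support_reverse, List.mem_reverse] at this
    have := hp w hwp
    simp only [Set.mem_diff, Set.mem_singleton_iff] at this
    intro hwT
    exact hwz (by by_contra h; exact (this ⟨hwT, h⟩))
  refine ⟨x, ⟨q'.reverse, ?_⟩, hadj.symm⟩
  intro w hw
  rw [Walk.support_reverse, List.mem_reverse] at hw
  exact hq'T w hw

lemma compOf_disjoint (hsep : Separates G u v T) :
    Disjoint (compOf G T u) (compOf G T v) := by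
  rw [Set.disjoint_left]
  rintro x ⟨p, hp⟩ ⟨q, hq⟩
  obtain ⟨z, hz, hzT⟩ := hsep (p.append q.reverse)
  rw [Walk.mem_support_append_iff] at hz
  rcases hz with hz | hz
  · exact hp z hz hzT
  · rw [Walk.support_reverse, List.mem_reverse] at hz
    exact hq z hz hzT

lemma eq_outNbhd_compOf (hT : IsMinCutSet G T) (hu : u ∉ T) (hv : v ∉ T)
    (hsep : Separates G u v T) : outNbhd G (compOf G T u) = T := by
  apply Set.Subset.antisymm outNbhd_compOf_subset
  intro t ht
  have hssub : T \ {t} ⊂ T := by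
    refine ⟨Set.diff_subset, fun h => ?_⟩
    exact (h ht).2 rfl
  have hnc : ¬ IsCutSet G (T \ {t}) := hT.2 _ hssub
  have hns : ¬ Separates G u v (T \ {t}) := by
    intro h
    exact hnc ⟨u, v, fun h' => hu h'.1, fun h' => hv h'.1, h⟩
  obtain ⟨x, hx, hadj⟩ := exists_adj_compOf hu hsep ht hns
  exact ⟨fun hc => not_mem_T_of_mem_compOf hc ht, x, hx, hadj⟩

/-- Main structural lemma: a minimal vertex cut either has small cardinality or is the
outer neighbourhood of a small set. -/
lemma key_struct {n : ℕ} {G : SimpleGraph (Fin n)} {T : Set (Fin n)}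
    (hT : IsMinCutSet G T) :
    ∃ S : Set (Fin n), 3 * S.ncard ≤ n ∧ (S = T ∨ outNbhd G S = T) := by
  obtain ⟨⟨u, v, hu, hv, hsep⟩, hmin⟩ := hT
  set A := compOf G T u with hA
  set B := compOf G T v with hB
  have hAT : outNbhd G A = T := eq_outNbhd_compOf ⟨⟨u,v,hu,hv,hsep⟩, hmin⟩ hu hv hsep
  have hBT : outNbhd G B = T :=
    eq_outNbhd_compOf ⟨⟨u,v,hu,hv,hsep⟩, hmin⟩ hv hu (sep_symm hsep)
  have hdAB : Disjoint A B := compOf_disjoint hsep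
  have hdAT : Disjoint A T := Set.disjoint_left.2 fun x hx => not_mem_T_of_mem_compOf hx
  have hdBT : Disjoint B T := Set.disjoint_left.2 fun x hx => not_mem_T_of_mem_compOf hx
  have hsum : A.ncard + B.ncard + T.ncard ≤ n := by
    have h1 : (A ∪ B ∪ T).ncard ≤ n := by
      have h := Set.ncard_le_ncard (Set.subset_univ (A ∪ B ∪ T)) (Set.finite_univ)
      rwa [Set.ncard_univ, Nat.card_eq_fintype_card, Fintype.card_fin] at h
    rw [Set.ncard_union_eq (by exact Set.disjoint_union_left.2 ⟨hdAT, hdBT⟩)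
        ((A.toFinite).union (B.toFinite)) T.toFinite,
      Set.ncard_union_eq hdAB A.toFinite B.toFinite] at h1
    exact h1
  have h3 : 3 * A.ncard ≤ n ∨ 3 * B.ncard ≤ n ∨ 3 * T.ncard ≤ n := by omega
  rcases h3 with h | h | h
  · exact ⟨A, h, Or.inr hAT⟩
  · exact ⟨B, h, Or.inr hBT⟩
  · exact ⟨T, h, Or.inl rfl⟩

lemma count_small_sets (n m : ℕ) :
    {S : Set (Fin n) | S.ncard ≤ m}.ncard ≤ ∑ k ∈ range (m + 1), n.choose k := by
  classical
  set t : Finset (Finset (Fin n)) := (range (m+1)).biUnion (fun k => univ.powersetCard k) with ht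
  have h1 : {S : Set (Fin n) | S.ncard ≤ m}.ncard ≤ (↑t : Set (Finset (Fin n))).ncard := by
    apply Set.ncard_le_ncard_of_injOn (fun S => S.toFinite.toFinset)
    · intro S hS
      simp only [Set.mem_setOf_eq] at hS
      rw [Finset.mem_coe, ht, Finset.mem_biUnion]
      refine ⟨S.ncard, by rw [Finset.mem_range]; omega, ?_⟩
      rw [Finset.mem_powersetCard_univ]
      exact (Set.ncard_eq_toFinset_card S S.toFinite).symm
    · intro S hS S' hS' h
      have := congrArg (fun (f : Finset (Fin n)) => (↑f : Set (Fin n))) h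
      simpa [Set.Finite.coe_toFinset] using this
  rw [Set.ncard_coe_finset] at h1
  calc {S : Set (Fin n) | S.ncard ≤ m}.ncard ≤ t.card := h1
    _ ≤ ∑ k ∈ range (m+1), (univ.powersetCard k : Finset (Finset (Fin n))).card :=
        Finset.card_biUnion_le
    _ = ∑ k ∈ range (m+1), n.choose k := by
        apply Finset.sum_congr rfl
        intro k _
        rw [Finset.card_powersetCard, Finset.card_univ, Fintype.card_fin]

lemma cuts_card_le {n : ℕ} (G : SimpleGraph (Fin n)) :
    {T : Set (Fin n) | IsMinCutSet G T}.ncard ≤ 2 * ∑ k ∈ range (n / 3 + 1), n.choose k := by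
  classical
  set A := {S : Set (Fin n) | S.ncard ≤ n / 3} with hA
  set s1 := {T : Set (Fin n) | IsMinCutSet G T ∧ T.ncard ≤ n / 3} with hs1
  set s2 := {T : Set (Fin n) | IsMinCutSet G T ∧ ¬ T.ncard ≤ n / 3} with hs2
  have hsplit : {T : Set (Fin n) | IsMinCutSet G T} = s1 ∪ s2 := by
    ext T; simp only [hs1, hs2, Set.mem_setOf_eq, Set.mem_union]; tauto
  have h1 : s1.ncard ≤ A.ncard := Set.ncard_le_ncard (fun T hT => hT.2) A.toFinite
  have hch : ∀ T ∈ s2, ∃ S : Set (Fin n), S.ncard ≤ n / 3 ∧ outNbhd G S = T := by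
    rintro T ⟨hT, hcard⟩
    obtain ⟨S, hS3, hS⟩ := key_struct hT
    have hSc : S.ncard ≤ n / 3 := by omega
    rcases hS with rfl | h
    · exact absurd hSc hcard
    · exact ⟨S, hSc, h⟩
  choose f hf1 hf2 using hch
  have h2 : s2.ncard ≤ A.ncard := by
    apply Set.ncard_le_ncard_of_injOn (fun T => if h : T ∈ s2 then f T h else ∅)
    · intro T hT
      simp only [dif_pos hT]
      exact hf1 T hT
    · intro T hT T' hT' h
      simp only [dif_pos hT, dif_pos hT'] at h
      rw [← hf2 T hT, ← hf2 T' hT', h]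
  have hAcount := count_small_sets n (n / 3)
  calc {T : Set (Fin n) | IsMinCutSet G T}.ncard = (s1 ∪ s2).ncard := by rw [hsplit]
    _ ≤ s1.ncard + s2.ncard := Set.ncard_union_le _ _
    _ ≤ A.ncard + A.ncard := Nat.add_le_add h1 h2
    _ = 2 * A.ncard := by ring
    _ ≤ 2 * ∑ k ∈ range (n / 3 + 1), n.choose k :=
        Nat.mul_le_mul_left 2 (by rw [hA]; exact hAcount)

lemma binH_third : binH (1/3) = Real.logb 2 3 - 2/3 := by
  unfold binH
  have h1 : Real.logb 2 (1/3 : ℝ) = - Real.logb 2 3 := by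
    rw [one_div, Real.logb_inv]
  have h2 : (1 : ℝ) - 1/3 = 2/3 := by norm_num
  have h3 : Real.logb 2 (2/3 : ℝ) = 1 - Real.logb 2 3 := by
    rw [Real.logb_div (by norm_num) (by norm_num), Real.logb_self_eq_one (by norm_num)]
  rw [h2, h1, h3]; ring

lemma logb_two_three_gt_one : 1 < Real.logb 2 3 := by
  have h := Real.logb_lt_logb (b := 2) (x := 2) (y := 3) (by norm_num) (by norm_num) (by norm_num)
  rwa [Real.logb_self_eq_one (by norm_num)] at h

lemma binH_third_pos : 0 < binH (1/3) := by
  rw [binH_third]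
  have := logb_two_three_gt_one
  linarith

lemma nat_sum_bound (n : ℕ) :
    (∑ k ∈ range (n / 3 + 1), n.choose k) * 2 ^ (n - n / 3) ≤ 3 ^ n := by
  have hm : n / 3 ≤ n := Nat.div_le_self n 3
  calc (∑ k ∈ range (n / 3 + 1), n.choose k) * 2 ^ (n - n / 3)
      = ∑ k ∈ range (n / 3 + 1), n.choose k * 2 ^ (n - n / 3) := by rw [Finset.sum_mul]
    _ ≤ ∑ k ∈ range (n / 3 + 1), n.choose k * 2 ^ (n - k) := by
        apply Finset.sum_le_sum
        intro k hk
        rw [Finset.mem_range] at hk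
        exact Nat.mul_le_mul_left _ (Nat.pow_le_pow_right (by norm_num) (by omega))
    _ ≤ ∑ k ∈ range (n + 1), n.choose k * 2 ^ (n - k) := by
        apply Finset.sum_le_sum_of_subset
        apply Finset.range_subset_range.2
        omega
    _ = 3 ^ n := by
        have := add_pow (1 : ℕ) 2 n
        simp only [one_pow, one_mul] at this
        rw [show (3:ℕ) = 1 + 2 by norm_num, this]
        apply Finset.sum_congr rfl
        intro k _
        push_cast
        ring

lemma real_bound (n : ℕ) :
    ((2 * ∑ k ∈ range (n / 3 + 1), n.choose k : ℕ) : ℝ) ≤ 2 * 2 ^ (binH (1/3) * n) := by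
  set m := n / 3 with hm
  have hmn : m ≤ n := Nat.div_le_self n 3
  have h3m : 3 * (m : ℝ) ≤ n := by
    have : 3 * m ≤ n := by omega
    exact_mod_cast this
  have hcast : ((n - m : ℕ) : ℝ) = (n : ℝ) - m := by
    rw [Nat.cast_sub hmn]
  have hS : ((∑ k ∈ range (m + 1), n.choose k : ℕ) : ℝ) * 2 ^ (n - m : ℕ) ≤ 3 ^ n := by
    exact_mod_cast nat_sum_bound n
  have h3n : (3 : ℝ) ^ n = 2 ^ (Real.logb 2 3 * n) := by
    rw [Real.rpow_mul (by norm_num), Real.rpow_logb (by norm_num) (by norm_num) (by norm_num),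
      Real.rpow_natCast]
  have hexp : Real.logb 2 3 * n ≤ binH (1/3) * n + ((n : ℝ) - m) := by
    rw [binH_third]; nlinarith [h3m]
  have hmono : (2:ℝ) ^ (Real.logb 2 3 * n) ≤ 2 ^ (binH (1/3) * n + ((n:ℝ) - m)) :=
    Real.rpow_le_rpow_of_exponent_le (by norm_num) hexp
  have hsplit : (2:ℝ) ^ (binH (1/3) * n + ((n:ℝ) - m)) = 2 ^ (binH (1/3) * n) * 2 ^ (n - m : ℕ) := by
    rw [Real.rpow_add (by norm_num), ← hcast, Real.rpow_natCast]
  have hpos : (0:ℝ) < 2 ^ (n - m : ℕ) := by positivity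
  have hfin : ((∑ k ∈ range (m + 1), n.choose k : ℕ) : ℝ) ≤ 2 ^ (binH (1/3) * n) := by
    have := hS.trans (h3n ▸ (hmono.trans_eq hsplit))
    exact le_of_mul_le_mul_right this hpos
  push_cast
  push_cast at hfin
  linarith

lemma c_le (n : ℕ) : (c n : ℝ) ≤ 2 * 2 ^ (binH (1/3) * n) := by
  have h1 : c n ≤ 2 * ∑ k ∈ range (n / 3 + 1), n.choose k := by
    apply csSup_le
    · exact ⟨_, ⟨⊥, rfl⟩⟩
    · rintro k ⟨G, rfl⟩
      exact cuts_card_le G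
  calc (c n : ℝ) ≤ ((2 * ∑ k ∈ range (n / 3 + 1), n.choose k : ℕ) : ℝ) := by exact_mod_cast h1
    _ ≤ 2 * 2 ^ (binH (1/3) * n) := real_bound n

lemma part1_aux : ∀ ε : ℝ, 0 < ε → ∃ N : ℕ, ∀ n : ℕ, N ≤ n →
    (c n : ℝ) ≤ (2 : ℝ) ^ ((1 + ε) * binH (1 / 3) * n) := by
  intro ε hε
  have hH := binH_third_pos
  obtain ⟨N, hN⟩ := exists_nat_ge (1 / (ε * binH (1/3)))
  refine ⟨N, fun n hn => ?_⟩
  refine (c_le n).trans ?_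
  have h1 : 1 ≤ ε * binH (1/3) * n := by
    have hpos : 0 < ε * binH (1/3) := by positivity
    rw [div_le_iff₀ hpos] at hN
    calc (1:ℝ) ≤ N * (ε * binH (1/3)) := hN
      _ ≤ n * (ε * binH (1/3)) := by
          apply mul_le_mul_of_nonneg_right _ hpos.le
          exact_mod_cast hn
      _ = ε * binH (1/3) * n := by ring
  calc 2 * (2:ℝ) ^ (binH (1/3) * n) = 2 ^ (1 + binH (1/3) * n) := by
        rw [Real.rpow_add (by norm_num), Real.rpow_one]
    _ ≤ 2 ^ ((1 + ε) * binH (1/3) * n) :=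
        Real.rpow_le_rpow_of_exponent_le (by norm_num) (by nlinarith)

lemma part2_aux : ∃ N : ℕ, ∀ n : ℕ, N ≤ n → (c n : ℝ) ≤ (1.8899 : ℝ) ^ n := by
  set ε : ℝ := Real.logb 2 1.8899 / binH (1/3) - 1 with hεdef
  have hH := binH_third_pos
  have hεpos : 0 < ε := by
    rw [hεdef, sub_pos, lt_div_iff₀ hH]
    rw [one_mul, binH_third]
    rw [sub_lt_iff_lt_add]
    have key : (3:ℝ) < 1.8899 * 2 ^ ((2:ℝ)/3) := by
      have hc : ((1.8899 : ℝ) * 2 ^ ((2:ℝ)/3)) ^ (3:ℕ) = 1.8899 ^ (3:ℕ) * 4 := by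
        rw [mul_pow, ← Real.rpow_natCast ((2:ℝ) ^ ((2:ℝ)/3)) 3, ← Real.rpow_mul (by norm_num)]
        norm_num
      nlinarith [Real.rpow_nonneg (by norm_num : (0:ℝ) ≤ 2) ((2:ℝ)/3),
        sq_nonneg ((1.8899:ℝ) * 2 ^ ((2:ℝ)/3) - 3), sq_nonneg ((1.8899:ℝ) * 2 ^ ((2:ℝ)/3) + 3)]
    have h2 : Real.logb 2 3 < Real.logb 2 (1.8899 * 2 ^ ((2:ℝ)/3)) :=
      Real.logb_lt_logb (by norm_num) (by norm_num) key
    rwa [Real.logb_mul (by norm_num) (by positivity),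
      Real.logb_rpow (b := 2) (by norm_num) (by norm_num)] at h2
  obtain ⟨N, hN⟩ := part1_aux ε hεpos
  refine ⟨N, fun n hn => ?_⟩
  refine (hN n hn).trans_eq ?_
  have hcoef : (1 + ε) * binH (1/3) = Real.logb 2 1.8899 := by
    rw [hεdef]; field_simp; ring
  rw [hcoef, Real.rpow_mul (by norm_num), Real.rpow_logb (by norm_num) (by norm_num) (by norm_num),
    Real.rpow_natCast]

end Aux


/-- For every `ε > 0`, for all large `n`, the maximum number `c n` of inclusion-wise
minimal vertex cuts of a graph on `n` vertices is at most `2 ^ ((1 + ε) · H(1/3) · n)`;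
in particular, for large `n` it is at most `1.8899 ^ n`. -/
theorem max_minimal_vertex_cuts_le :
    (∀ ε : ℝ, 0 < ε → ∃ N : ℕ, ∀ n : ℕ, N ≤ n →
      (c n : ℝ) ≤ (2 : ℝ) ^ ((1 + ε) * binH (1 / 3) * n)) ∧
    (∃ N : ℕ, ∀ n : ℕ, N ≤ n → (c n : ℝ) ≤ (1.8899 : ℝ) ^ n) :=
  ⟨part1_aux, part2_aux⟩
end

section
/- lim_{n→∞} c(n)^(1/n) ≥ 3^(1/3). -/
open Filter

namespace CProof

abbrev Vt (k : ℕ) := Fin 2 ⊕ Fin k × Fin 3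

def gAdj (k : ℕ) : Vt k → Vt k → Prop
  | Sum.inl u, Sum.inr (_, a) => ((u:ℕ) = 0 ∧ (a:ℕ) = 0) ∨ ((u:ℕ) = 1 ∧ (a:ℕ) = 2)
  | Sum.inr (_, a), Sum.inl u => ((u:ℕ) = 0 ∧ (a:ℕ) = 0) ∨ ((u:ℕ) = 1 ∧ (a:ℕ) = 2)
  | Sum.inr (i, a), Sum.inr (j, b) => i = j ∧ ((a:ℕ) + 1 = (b:ℕ) ∨ (b:ℕ) + 1 = (a:ℕ))
  | _, _ => False

def GG (k : ℕ) : SimpleGraph (Vt k) where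
  Adj := gAdj k
  symm := ⟨by rintro (u|⟨i,a⟩) (v|⟨j,b⟩) h <;> simp only [gAdj] at * <;> tauto⟩
  loopless := ⟨by rintro (u|⟨i,a⟩) h <;> simp only [gAdj] at h <;> omega⟩

variable {k : ℕ}

lemma GG_adj {x y : Vt k} : (GG k).Adj x y ↔ gAdj k x y := Iff.rfl

lemma adj_l0 (i : Fin k) : (GG k).Adj (Sum.inl 0) (Sum.inr (i, 0)) := by
  simp [GG_adj, gAdj]

lemma adj_l1 (i : Fin k) : (GG k).Adj (Sum.inl 1) (Sum.inr (i, 2)) := by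
  simp [GG_adj, gAdj]

lemma adj_10 (i : Fin k) : (GG k).Adj (Sum.inr (i, 1)) (Sum.inr (i, 0)) := by
  simp [GG_adj, gAdj]

lemma adj_21 (i : Fin k) : (GG k).Adj (Sum.inr (i, 2)) (Sum.inr (i, 1)) := by
  simp [GG_adj, gAdj]

lemma adj_0l (i : Fin k) : (GG k).Adj (Sum.inr (i, 0)) (Sum.inl 0) := ((GG k).adj_symm (adj_l0 i))
lemma adj_2l (i : Fin k) : (GG k).Adj (Sum.inr (i, 2)) (Sum.inl 1) := ((GG k).adj_symm (adj_l1 i))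
lemma adj_12 (i : Fin k) : (GG k).Adj (Sum.inr (i, 1)) (Sum.inr (i, 2)) := ((GG k).adj_symm (adj_21 i))

open SimpleGraph

def w0 (i : Fin k) : (GG k).Walk (Sum.inr (i, 0)) (Sum.inl 0) := Walk.cons (adj_0l i) Walk.nil
def w1 (i : Fin k) : (GG k).Walk (Sum.inr (i, 1)) (Sum.inl 0) := Walk.cons (adj_10 i) (w0 i)
def w2 (i : Fin k) : (GG k).Walk (Sum.inr (i, 2)) (Sum.inl 0) := Walk.cons (adj_21 i) (w1 i)
def z2 (i : Fin k) : (GG k).Walk (Sum.inr (i, 2)) (Sum.inl 1) := Walk.cons (adj_2l i) Walk.nil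
def z1 (i : Fin k) : (GG k).Walk (Sum.inr (i, 1)) (Sum.inl 1) := Walk.cons (adj_12 i) (z2 i)
def wP (j : Fin k) : (GG k).Walk (Sum.inl 1) (Sum.inl 0) := Walk.cons (adj_l1 j) (w2 j)

lemma w0_support (i : Fin k) : (w0 i).support = [Sum.inr (i,0), Sum.inl 0] := by
  simp [w0]
lemma w1_support (i : Fin k) : (w1 i).support = [Sum.inr (i,1), Sum.inr (i,0), Sum.inl 0] := by
  simp [w1, w0]
lemma w2_support (i : Fin k) : (w2 i).support = [Sum.inr (i,2), Sum.inr (i,1), Sum.inr (i,0), Sum.inl 0] := by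
  simp [w2, w1, w0]
lemma z2_support (i : Fin k) : (z2 i).support = [Sum.inr (i,2), Sum.inl 1] := by
  simp [z2]
lemma z1_support (i : Fin k) : (z1 i).support = [Sum.inr (i,1), Sum.inr (i,2), Sum.inl 1] := by
  simp [z1, z2]
lemma wP_support (j : Fin k) : (wP j).support = [Sum.inl 1, Sum.inr (j,2), Sum.inr (j,1), Sum.inr (j,0), Sum.inl 0] := by
  simp [wP, w2, w1, w0]


def Tset (f : Fin k → Fin 3) : Set (Vt k) := {x | ∃ i, x = Sum.inr (i, f i)}

def Aset (f : Fin k → Fin 3) : Set (Vt k) :=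
  {x | x = Sum.inl 0 ∨ ∃ i a, x = Sum.inr (i, a) ∧ (a:ℕ) < (f i : ℕ)}

lemma inl_notmem_T (f : Fin k → Fin 3) (u : Fin 2) : Sum.inl u ∉ Tset f := by
  rintro ⟨i, h⟩; exact absurd h (by simp)

lemma inr_mem_T {f : Fin k → Fin 3} {i : Fin k} {b : Fin 3}
    (h : Sum.inr (i, b) ∈ Tset f) : b = f i := by
  obtain ⟨i', h⟩ := h
  obtain ⟨rfl, h2⟩ : i = i' ∧ b = f i' := by simpa using h
  exact h2

lemma closure (f : Fin k → Fin 3) :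
    ∀ x ∈ Aset f, ∀ y, (GG k).Adj x y → y ∉ Tset f → y ∈ Aset f := by
  rintro x (rfl | ⟨i, a, rfl, hlt⟩) y hadj hy
  · rcases y with v | ⟨j, b⟩
    · exact absurd hadj (by simp [GG_adj, gAdj])
    · rw [GG_adj] at hadj
      simp only [gAdj, Fin.val_zero] at hadj
      have hb : (b:ℕ) = 0 := by omega
      have hne : b ≠ f j := fun h => hy ⟨j, by rw [h]⟩
      have : (b:ℕ) ≠ (f j : ℕ) := fun h => hne (Fin.ext h)
      exact Or.inr ⟨j, b, rfl, by omega⟩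
  · rcases y with v | ⟨j, b⟩
    · rw [GG_adj] at hadj
      simp only [gAdj] at hadj
      have h3 : (f i : ℕ) < 3 := (f i).isLt
      have hv : (v:ℕ) = 0 := by omega
      exact Or.inl (by rw [show v = 0 from Fin.ext hv])
    · rw [GG_adj] at hadj
      simp only [gAdj] at hadj
      obtain ⟨rfl, hab⟩ := hadj
      have hne : b ≠ f i := fun h => hy ⟨i, by rw [h]⟩
      have hne' : (b:ℕ) ≠ (f i : ℕ) := fun h => hne (Fin.ext h)
      exact Or.inr ⟨i, b, rfl, by omega⟩

lemma walk_stays {A T : Set (Vt k)}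
    (hcl : ∀ x ∈ A, ∀ y, (GG k).Adj x y → y ∉ T → y ∈ A) :
    ∀ {u x : Vt k} (p : (GG k).Walk u x), u ∈ A → (∀ y ∈ p.support, y ∉ T) → x ∈ A := by
  intro u x p
  induction p with
  | nil => exact fun h _ => h
  | @cons u w x h q ih =>
    intro hu hs
    exact ih (hcl u hu w h (hs w (by simp [SimpleGraph.Walk.start_mem_support])))
      (fun y hy => hs y (by simp [hy]))

lemma separates_T (f : Fin k → Fin 3) :
    Separates (GG k) (Sum.inl 0) (Sum.inl 1) (Tset f) := by
  intro p
  by_contra hc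
  push_neg at hc
  have h1 : (Sum.inl 1 : Vt k) ∈ Aset f :=
    walk_stays (closure f) p (Or.inl rfl) hc
  rcases h1 with h | ⟨i, a, h, _⟩ <;> simp at h


lemma toZero (f : Fin k → Fin 3) (T' : Set (Vt k)) (hT' : T' ⊆ Tset f)
    (j : Fin k) (hj : Sum.inr (j, f j) ∉ T') :
    ∀ x ∉ T', ∃ p : (GG k).Walk x (Sum.inl 0), ∀ y ∈ p.support, y ∉ T' := by
  have hmem : ∀ (i : Fin k) (b : Fin 3), Sum.inr (i, b) ∈ T' → b = f i :=
    fun i b h => inr_mem_T (hT' h)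
  have hinl : ∀ u : Fin 2, Sum.inl u ∉ T' := fun u h => inl_notmem_T f u (hT' h)
  have hpj : ∀ b : Fin 3, Sum.inr (j, b) ∉ T' := by
    intro b h
    have := hmem j b h
    exact hj (this ▸ h)
  intro x hx
  rcases x with u | ⟨i, a⟩
  · fin_cases u
    · exact ⟨SimpleGraph.Walk.nil, by simp [hinl 0]⟩
    · refine ⟨wP j, ?_⟩
      intro y hy
      rw [wP_support] at hy
      simp only [List.mem_cons, List.not_mem_nil, or_false] at hy
      rcases hy with rfl | rfl | rfl | rfl | rfl
      · exact hinl 1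
      · exact hpj 2
      · exact hpj 1
      · exact hpj 0
      · exact hinl 0
  · have hclear : Sum.inr (i, f i) ∉ T' → ∀ b : Fin 3, Sum.inr (i, b) ∉ T' := by
      intro hfi b h
      exact hfi ((hmem i b h) ▸ h)
    by_cases hfi : Sum.inr (i, f i) ∈ T'
    · have hne : (a:ℕ) ≠ (f i : ℕ) := by
        intro h
        exact hx ((Fin.ext h : a = f i) ▸ hfi)
      have hnb : ∀ b : Fin 3, (b:ℕ) ≠ (f i : ℕ) → Sum.inr (i, b) ∉ T' := by
        intro b hb h
        exact hb (congrArg Fin.val (hmem i b h))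
      by_cases hlt : (a:ℕ) < (f i : ℕ)
      · have h3 : (f i : ℕ) < 3 := (f i).isLt
        fin_cases a
        · refine ⟨w0 i, ?_⟩
          intro y hy
          rw [w0_support] at hy
          simp only [List.mem_cons, List.not_mem_nil, or_false] at hy
          rcases hy with rfl | rfl
          · exact hnb 0 (by simp at hlt ⊢; omega)
          · exact hinl 0
        · refine ⟨w1 i, ?_⟩
          intro y hy
          rw [w1_support] at hy
          simp only [List.mem_cons, List.not_mem_nil, or_false] at hy
          rcases hy with rfl | rfl | rfl
          · exact hnb 1 (by simp at hlt ⊢; omega)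
          · exact hnb 0 (by simp at hlt ⊢; omega)
          · exact hinl 0
        · exact absurd hlt (by simp; omega)
      · have hgt : (f i : ℕ) < (a:ℕ) := by omega
        have h3 : (a : ℕ) < 3 := a.isLt
        have key : ∀ b : Fin 3, (a:ℕ) ≤ (b:ℕ) → Sum.inr (i, b) ∉ T' :=
          fun b hb => hnb b (by omega)
        fin_cases a
        · exact absurd hgt (by simp)
        · refine ⟨(z1 i).append (wP j), ?_⟩
          intro y hy
          rw [SimpleGraph.Walk.support_append, List.mem_append] at hy
          rcases hy with hy | hy
          · rw [z1_support] at hy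
            simp only [List.mem_cons, List.not_mem_nil, or_false] at hy
            rcases hy with rfl | rfl | rfl
            · exact key 1 (by simp)
            · exact key 2 (by simp)
            · exact hinl 1
          · have hy' : y ∈ (wP j).support := List.mem_of_mem_tail hy
            rw [wP_support] at hy'
            simp only [List.mem_cons, List.not_mem_nil, or_false] at hy'
            rcases hy' with rfl | rfl | rfl | rfl | rfl
            · exact hinl 1
            · exact hpj 2
            · exact hpj 1
            · exact hpj 0
            · exact hinl 0
        · refine ⟨(z2 i).append (wP j), ?_⟩
          intro y hy
          rw [SimpleGraph.Walk.support_append, List.mem_append] at hy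
          rcases hy with hy | hy
          · rw [z2_support] at hy
            simp only [List.mem_cons, List.not_mem_nil, or_false] at hy
            rcases hy with rfl | rfl
            · exact key 2 (by simp)
            · exact hinl 1
          · have hy' : y ∈ (wP j).support := List.mem_of_mem_tail hy
            rw [wP_support] at hy'
            simp only [List.mem_cons, List.not_mem_nil, or_false] at hy'
            rcases hy' with rfl | rfl | rfl | rfl | rfl
            · exact hinl 1
            · exact hpj 2
            · exact hpj 1
            · exact hpj 0
            · exact hinl 0
    · have hok := hclear hfi
      fin_cases a
      · refine ⟨w0 i, ?_⟩
        intro y hy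
        rw [w0_support] at hy
        simp only [List.mem_cons, List.not_mem_nil, or_false] at hy
        rcases hy with rfl | rfl
        · exact hok 0
        · exact hinl 0
      · refine ⟨w1 i, ?_⟩
        intro y hy
        rw [w1_support] at hy
        simp only [List.mem_cons, List.not_mem_nil, or_false] at hy
        rcases hy with rfl | rfl | rfl
        · exact hok 1
        · exact hok 0
        · exact hinl 0
      · refine ⟨w2 i, ?_⟩
        intro y hy
        rw [w2_support] at hy
        simp only [List.mem_cons, List.not_mem_nil, or_false] at hy
        rcases hy with rfl | rfl | rfl | rfl
        · exact hok 2
        · exact hok 1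
        · exact hok 0
        · exact hinl 0

lemma isMinCutSet_T (f : Fin k → Fin 3) : IsMinCutSet (GG k) (Tset f) := by
  constructor
  · exact ⟨Sum.inl 0, Sum.inl 1, inl_notmem_T f 0, inl_notmem_T f 1, separates_T f⟩
  · rintro T' hss ⟨a, b, ha, hb, hsep⟩
    obtain ⟨hsub, hne⟩ := Set.ssubset_iff_subset_ne.mp hss
    obtain ⟨t, htT, htT'⟩ := Set.exists_of_ssubset hss
    obtain ⟨j, rfl⟩ := htT
    obtain ⟨pa, hpa⟩ := toZero f T' hsub j htT' a ha
    obtain ⟨pb, hpb⟩ := toZero f T' hsub j htT' b hb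
    obtain ⟨x, hx, hxT⟩ := hsep (pa.append pb.reverse)
    rw [SimpleGraph.Walk.support_append, List.mem_append] at hx
    rcases hx with hx | hx
    · exact hpa x hx hxT
    · have : x ∈ pb.support := by
        have h1 : x ∈ pb.reverse.support := List.mem_of_mem_tail hx
        rwa [SimpleGraph.Walk.support_reverse, List.mem_reverse] at h1
      exact hpb x this hxT


lemma Tset_injective : Function.Injective (Tset (k := k)) := by
  intro f g h
  funext i
  have h1 : Sum.inr (i, f i) ∈ Tset g := h ▸ ⟨i, rfl⟩
  exact inr_mem_T h1

lemma count_lb : 3 ^ k ≤ {T : Set (Vt k) | IsMinCutSet (GG k) T}.ncard := by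
  have h1 : (Tset '' (Set.univ : Set (Fin k → Fin 3))) ⊆
      {T : Set (Vt k) | IsMinCutSet (GG k) T} := by
    rintro _ ⟨f, -, rfl⟩
    exact isMinCutSet_T f
  calc 3 ^ k = (Set.univ : Set (Fin k → Fin 3)).ncard := by
        rw [Set.ncard_univ, Nat.card_eq_fintype_card]
        simp [Fintype.card_fun]
    _ = (Tset '' (Set.univ : Set (Fin k → Fin 3))).ncard :=
        (Set.ncard_image_of_injective _ Tset_injective).symm
    _ ≤ _ := Set.ncard_le_ncard h1 (Set.toFinite _)

section iso
variable {V W : Type*} {G : SimpleGraph V} {G' : SimpleGraph W}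

lemma sep_map (φ : G ≃g G') {u v : V} {T : Set V}
    (h : Separates G u v T) : Separates G' (φ u) (φ v) (φ '' T) := by
  intro p
  obtain ⟨x, hx, hxT⟩ :=
    h (((p.map φ.symm.toHom)).copy (by simp) (by simp))
  rw [SimpleGraph.Walk.support_copy, SimpleGraph.Walk.support_map] at hx
  obtain ⟨y, hy, rfl⟩ := List.mem_map.mp hx
  exact ⟨y, hy, ⟨φ.symm y, hxT, by simp⟩⟩

lemma cut_map (φ : G ≃g G') {T : Set V} (h : IsCutSet G T) : IsCutSet G' (φ '' T) := by
  obtain ⟨u, v, hu, hv, hs⟩ := h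
  exact ⟨φ u, φ v,
    fun hc => hu ((Function.Injective.mem_set_image φ.injective).mp hc),
    fun hc => hv ((Function.Injective.mem_set_image φ.injective).mp hc),
    sep_map φ hs⟩

lemma minCut_map (φ : G ≃g G') {T : Set V} (h : IsMinCutSet G T) :
    IsMinCutSet G' (φ '' T) := by
  obtain ⟨hc, hmin⟩ := h
  refine ⟨cut_map φ hc, ?_⟩
  intro S hS hcS
  have h0 : ⇑φ.symm '' (⇑φ '' T) = T := by
    rw [Set.image_image]; simp
  have h1 : ⇑φ.symm '' S ⊂ T := by
    rw [← h0]
    exact (Set.InjOn.image_ssubset_image_iff (φ.symm.injective.injOn) (Set.subset_univ _) (Set.subset_univ _)).mpr hS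
  exact hmin _ h1 (cut_map φ.symm hcS)

lemma ncard_mincut_le [Finite W] (φ : G ≃g G') :
    {T : Set V | IsMinCutSet G T}.ncard ≤ {T : Set W | IsMinCutSet G' T}.ncard := by
  have hsub : (Set.image ⇑φ) '' {T : Set V | IsMinCutSet G T} ⊆
      {T : Set W | IsMinCutSet G' T} := by
    rintro _ ⟨T, hT, rfl⟩
    exact minCut_map φ hT
  calc {T : Set V | IsMinCutSet G T}.ncard
      = ((Set.image ⇑φ) '' {T : Set V | IsMinCutSet G T}).ncard :=
        (Set.ncard_image_of_injective _ (Set.image_injective.mpr φ.injective)).symm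
    _ ≤ _ := Set.ncard_le_ncard hsub (Set.toFinite _)

end iso

lemma card_Vt : Fintype.card (Vt k) = 3 * k + 2 := by
  simp [Vt]; ring

lemma c_lb (k : ℕ) : 3 ^ k ≤ c (3 * k + 2) := by
  let e : Vt k ≃ Fin (3 * k + 2) := Fintype.equivFinOfCardEq card_Vt
  let G' : SimpleGraph (Fin (3 * k + 2)) := (GG k).comap ⇑e.symm
  have hmap : ∀ a b : Vt k, G'.Adj (e a) (e b) ↔ (GG k).Adj a b := by
    intro a b; simp [G', SimpleGraph.comap]
  let φ : GG k ≃g G' := ⟨e, hmap _ _⟩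
  have h1 := count_lb (k := k)
  have h2 := ncard_mincut_le φ
  have h3 : {T : Set (Fin (3 * k + 2)) | IsMinCutSet G' T}.ncard ≤ c (3 * k + 2) := by
    apply le_csSup
    · refine ⟨Nat.card (Set (Fin (3 * k + 2))), ?_⟩
      rintro m ⟨G'', rfl⟩
      calc {T : Set (Fin (3 * k + 2)) | IsMinCutSet G'' T}.ncard
          ≤ (Set.univ : Set (Set (Fin (3 * k + 2)))).ncard :=
            Set.ncard_le_ncard (Set.subset_univ _) (Set.toFinite _)
        _ = _ := Set.ncard_univ _
    · exact ⟨G', rfl⟩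
  omega

end CProof

open CProof in

/-- `lim_{n→∞} c n ^ (1/n) ≥ 3 ^ (1/3)`. -/
theorem c_limit_ge (L : ℝ)
    (hL : Tendsto (fun n : ℕ => (c n : ℝ) ^ (1 / (n : ℝ))) atTop (nhds L)) :
    (3 : ℝ) ^ ((1 : ℝ) / 3) ≤ L := by
  have h1 : Tendsto (fun m : ℕ => 3 * m + 2) atTop atTop :=
    tendsto_atTop_mono (f := id) (fun m => by simp only [id]; omega) tendsto_id
  have h2 : Tendsto (fun m : ℕ => (c (3 * m + 2) : ℝ) ^ (1 / ((3 * m + 2 : ℕ) : ℝ)))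
      atTop (nhds L) := hL.comp h1
  have h3 : Tendsto (fun m : ℕ => ((m : ℝ) / (3 * m + 2))) atTop (nhds (1 / 3)) := by
    have ht : Tendsto (fun m : ℕ => (3 : ℝ) + 2 / m) atTop (nhds 3) := by
      have := tendsto_const_div_atTop_nhds_zero_nat (2 : ℝ)
      simpa using tendsto_const_nhds.add this
    have ht2 : Tendsto (fun m : ℕ => 1 / ((3 : ℝ) + 2 / m)) atTop (nhds (1 / 3)) :=
      tendsto_const_nhds.div ht (by norm_num)
    refine ht2.congr' ?_
    filter_upwards [eventually_ge_atTop 1] with m hm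
    have hm' : (m : ℝ) ≠ 0 := by positivity
    field_simp
  have h4 : Tendsto (fun m : ℕ => (3 : ℝ) ^ ((m : ℝ) / (3 * m + 2))) atTop
      (nhds ((3 : ℝ) ^ ((1 : ℝ) / 3))) :=
    tendsto_const_nhds.rpow h3 (Or.inl (by norm_num))
  refine le_of_tendsto_of_tendsto' h4 h2 ?_
  intro m
  have hc : ((3 : ℝ) ^ m) ≤ (c (3 * m + 2) : ℝ) := by exact_mod_cast c_lb m
  have hcast : ((3 * m + 2 : ℕ) : ℝ) = 3 * (m : ℝ) + 2 := by push_cast; ring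
  have hpos : (0 : ℝ) < 3 * (m : ℝ) + 2 := by positivity
  calc (3 : ℝ) ^ ((m : ℝ) / (3 * m + 2))
      = ((3 : ℝ) ^ m) ^ (1 / ((3 * m + 2 : ℕ) : ℝ)) := by
        rw [← Real.rpow_natCast 3 m, ← Real.rpow_mul (by norm_num)]
        rw [hcast, mul_one_div]
    _ ≤ (c (3 * m + 2) : ℝ) ^ (1 / ((3 * m + 2 : ℕ) : ℝ)) :=
        Real.rpow_le_rpow (by positivity) hc (by rw [hcast]; positivity)
end
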